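/- arXiv:2604.14537 — 6 statements merged into one kernel-verified Lean document; each statement's English description precedes it below -/
import Mathlib

section
/- Let (X,d) be a metric space and μ a Borel measure on X such that every open metric ball of positive radius has positive and finite measure. Suppose μ satisfies a Bishop–Gromov type comparison: there exists n ≥ 0 such that for every point p ∈ X and all radii 0 < r ≤ R one has μ(B_R(p)) ≤ (R/r)^n · μ(B_r(p)). Then for every s ≥ 1 and any two points p, q ∈ X, limsup_{r→∞} μ(B_{rs}(p))/μ(B_r(p)) = limsup_{r→∞} μ(B_{rs}(q))/μ(B_r(q)); that is, the relative volume growth function RV(s) is independent of the choice of base point. -/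
/-!
Moving the base point by `d = dist p q` shifts balls by at most `d`: `B_{rs}(q) ⊆ B_{rs+d}(p)` and
`B_{r-d}(p) ⊆ B_r(q)`. Bishop–Gromov at `p` compares `B_{rs+d}(p)` with `B_{(r-d)s}(p)` at the cost
of the factor `((rs+d)/((r-d)s))^n`, which tends to `1` as `r → ∞`; so the ratio at `q` and radius
`r` is bounded by the ratio at `p` and radius `r - d`, up to a factor tending to `1`. Taking limsups,
and noting that the shift `r ↦ r - d` does not change a limsup at infinity, gives `RV_q ≤ RV_p`.
-/

open MeasureTheory Metric Filter Topology

namespace Filter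

theorem limsup_comp_sub_const_atTop {α : Type*} [ConditionallyCompleteLattice α]
    (u : ℝ → α) (d : ℝ) : limsup (fun r => u (r - d)) atTop = limsup u atTop :=
  (limsup_comp u (· - d) atTop).trans (by rw [map_sub_atTop_eq])

end Filter

theorem tendsto_add_div_sub_mul_atTop {s : ℝ} (hs : s ≠ 0) (d : ℝ) :
    Tendsto (fun r => (r * s + d) / ((r - d) * s)) atTop (𝓝 1) := by
  have h : Tendsto (fun r : ℝ => (s + d * r⁻¹) / ((1 - d * r⁻¹) * s)) atTop
      (𝓝 ((s + d * 0) / ((1 - d * 0) * s))) := by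
    have hinv := tendsto_inv_atTop_zero (𝕜 := ℝ)
    refine ((tendsto_const_nhds.add (hinv.const_mul d)).div
      ((tendsto_const_nhds.sub (hinv.const_mul d)).mul tendsto_const_nhds) ?_)
    simpa using hs
  rw [mul_zero, add_zero, sub_zero, one_mul, div_self hs] at h
  refine h.congr' ?_
  filter_upwards [eventually_ne_atTop 0] with r hr
  field_simp

section RelativeVolumeGrowth

variable {X : Type*} [PseudoMetricSpace X] [MeasurableSpace X]

def BishopGromovAt (μ : Measure X) (n : ℝ) (p : X) : Prop :=
  ∀ r R : ℝ, 0 < r → r ≤ R → μ (ball p R) ≤ ENNReal.ofReal ((R / r) ^ n) * μ (ball p r)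

noncomputable def relVolGrowth (μ : Measure X) (p : X) (s : ℝ) : ENNReal :=
  limsup (fun r : ℝ => μ (ball p (r * s)) / μ (ball p r)) atTop

variable {μ : Measure X} {n : ℝ} {p : X}

theorem BishopGromovAt.measure_ball_div_le_of_dist_lt (hBG : BishopGromovAt μ n p) (q : X)
    {r s : ℝ} (hs : 0 < s) (hr : dist p q < r) :
    μ (ball q (r * s)) / μ (ball q r)
      ≤ ENNReal.ofReal (((r * s + dist p q) / ((r - dist p q) * s)) ^ n)
        * (μ (ball p ((r - dist p q) * s)) / μ (ball p (r - dist p q))) := by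
  set d := dist p q
  have hd : 0 ≤ d := dist_nonneg
  have hrd : 0 < r - d := sub_pos.mpr hr
  calc μ (ball q (r * s)) / μ (ball q r)
      ≤ μ (ball p (r * s + d)) / μ (ball p (r - d)) :=
        ENNReal.div_le_div (measure_mono (ball_subset_ball' (by rw [dist_comm])))
          (measure_mono (ball_subset_ball' (by linarith)))
    _ ≤ ENNReal.ofReal (((r * s + d) / ((r - d) * s)) ^ n) * μ (ball p ((r - d) * s))
          / μ (ball p (r - d)) := by
        gcongr
        exact hBG _ _ (mul_pos hrd hs) (by nlinarith)
    _ = _ := mul_div_assoc _ _ _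

theorem BishopGromovAt.relVolGrowth_le (hBG : BishopGromovAt μ n p) (q : X) {s : ℝ}
    (hs : 0 < s) : relVolGrowth μ q s ≤ relVolGrowth μ p s := by
  set d := dist p q
  set c : ℝ → ENNReal := fun r => ENNReal.ofReal (((r * s + d) / ((r - d) * s)) ^ n)
  have hc : Tendsto c atTop (𝓝 1) := by
    simpa using ENNReal.tendsto_ofReal
      ((tendsto_add_div_sub_mul_atTop hs.ne' d).rpow_const (Or.inl one_ne_zero))
  have hc_limsup : limsup c atTop = 1 := hc.limsup_eq
  calc relVolGrowth μ q s
      ≤ limsup (c * fun r => μ (ball p ((r - d) * s)) / μ (ball p (r - d))) atTop := by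
        refine limsup_le_limsup ?_
        filter_upwards [eventually_gt_atTop d] with r hr
        exact hBG.measure_ball_div_le_of_dist_lt q hs hr
    _ ≤ limsup c atTop
          * limsup (fun r => μ (ball p ((r - d) * s)) / μ (ball p (r - d))) atTop :=
        ENNReal.limsup_mul_le' (by simp [hc_limsup]) (by simp [hc_limsup])
    _ = relVolGrowth μ p s := by
        rw [hc_limsup, one_mul,
          limsup_comp_sub_const_atTop (fun r => μ (ball p (r * s)) / μ (ball p r))]
        rfl

end RelativeVolumeGrowth

theorem relative_volume_growth_base_point_independent_general
    {X : Type*} [MetricSpace X] [MeasurableSpace X]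
    (μ : Measure X)
    (n : ℝ)
    (hBG : ∀ (p : X) (r R : ℝ), 0 < r → r ≤ R →
      μ (ball p R) ≤ ENNReal.ofReal ((R / r) ^ n) * μ (ball p r))
    (s : ℝ) (hs : 1 ≤ s) (p q : X) :
    limsup (fun r : ℝ => μ (ball p (r * s)) / μ (ball p r)) atTop
      = limsup (fun r : ℝ => μ (ball q (r * s)) / μ (ball q r)) atTop := by
  have hs₀ : 0 < s := one_pos.trans_le hs
  exact le_antisymm (BishopGromovAt.relVolGrowth_le (hBG q) p hs₀)
    (BishopGromovAt.relVolGrowth_le (hBG p) q hs₀)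

/-- **Base-point independence of the relative volume growth function.**
If a Borel measure on a metric space gives every open ball of positive radius
positive and finite measure, and satisfies a Bishop–Gromov type comparison
`μ(B_R(p)) ≤ (R/r)^n · μ(B_r(p))` for `0 < r ≤ R`, then for every `s ≥ 1` the
relative volume growth `RV(s) = limsup_{r→∞} μ(B_{rs}(p))/μ(B_r(p))` does not
depend on the base point `p`. -/
theorem relative_volume_growth_base_point_independent
    {X : Type*} [MetricSpace X] [MeasurableSpace X] [BorelSpace X]
    (μ : Measure X)
    (hpos : ∀ (p : X) (r : ℝ), 0 < r → 0 < μ (ball p r))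
    (hfin : ∀ (p : X) (r : ℝ), 0 < r → μ (ball p r) < ⊤)
    (n : ℝ) (hn : 0 ≤ n)
    (hBG : ∀ (p : X) (r R : ℝ), 0 < r → r ≤ R →
      μ (ball p R) ≤ ENNReal.ofReal ((R / r) ^ n) * μ (ball p r))
    (s : ℝ) (hs : 1 ≤ s) (p q : X) :
    limsup (fun r : ℝ => μ (ball p (r * s)) / μ (ball p r)) atTop
      = limsup (fun r : ℝ => μ (ball q (r * s)) / μ (ball q r)) atTop :=
  relative_volume_growth_base_point_independent_general μ n hBG s hs p q
end

section
/- Let (X,d) be a metric space, p ∈ X a base point, and μ a Borel measure on X such that every open ball B_r(p) with r > 0 has positive and finite measure. Let β > 0 and define RV(s) := limsup_{r→∞} μ(B_{rs}(p))/μ(B_r(p)) for s ≥ 1. If liminf_{s→∞} RV(s)/s^β = L < 1, then lim_{r→∞} μ(B_r(p))/r^β = 0. -/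
/-!
Choose `s > 1` and `c < 1` with `RV(s) < c s^β`. Then `μ(B_{rs}) ≤ c s^β μ(B_r)` for all large `r`,
i.e. `W(r) = μ(B_r)/r^β` satisfies `W(rs) ≤ c W(r)`. Writing `r = t s^m` with `t` in the fundamental
interval `[R₀, R₀ s)`, on which `W ≤ μ(B_{R₀ s})/R₀^β < ∞` by monotonicity, gives `W(r) ≤ c^m W(t)`,
which decays geometrically as `r → ∞`.
-/

open MeasureTheory Metric Filter Set Topology
open scoped ENNReal

theorem ENNReal.le_mul_of_div_lt {a b K : ℝ≥0∞} (h : a / b < K) (hK : K ≠ ∞) : a ≤ K * b :=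
  (ENNReal.div_le_iff_le_mul (Or.inr hK) (Or.inr (pos_of_gt h).ne')).mp h.le

theorem exists_le_div_pow_mem_Ico {R₀ s r : ℝ} {n : ℕ} (hR₀ : 0 < R₀) (hs : 1 < s)
    (hr : R₀ * s ^ n ≤ r) : ∃ m, n ≤ m ∧ r / s ^ m ∈ Ico R₀ (R₀ * s) := by
  have hRn : 0 < R₀ * s ^ n := by positivity
  obtain ⟨k, hk_le, hk_lt⟩ := exists_nat_pow_near ((one_le_div hRn).mpr hr) hs
  have hsk : 0 < s ^ n * s ^ k := by positivity
  refine ⟨n + k, Nat.le_add_right n k, ?_, ?_⟩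
  · rw [pow_add, le_div_iff₀ hsk]
    rw [le_div_iff₀ hRn] at hk_le
    linarith
  · rw [pow_add, div_lt_iff₀ hsk]
    rw [div_lt_iff₀ hRn, pow_succ] at hk_lt
    linarith

theorem le_pow_mul_of_le_mul_comp_mul {W : ℝ → ℝ≥0∞} {s R₀ : ℝ} {c : ℝ≥0∞}
    (hs : 1 ≤ s) (hR₀ : 0 ≤ R₀) (hstep : ∀ r, R₀ ≤ r → W (r * s) ≤ c * W r) (n : ℕ) :
    ∀ r, R₀ ≤ r → W (r * s ^ n) ≤ c ^ n * W r := by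
  induction n with
  | zero => simp
  | succ n ih =>
    intro r hr
    calc W (r * s ^ (n + 1)) = W (r * s * s ^ n) := by rw [pow_succ', mul_assoc]
      _ ≤ c ^ n * W (r * s) := ih _ (by nlinarith)
      _ ≤ c ^ n * (c * W r) := by gcongr; exact hstep r hr
      _ = c ^ (n + 1) * W r := by rw [pow_succ, mul_assoc]

theorem tendsto_zero_of_le_mul_comp_mul {W : ℝ → ℝ≥0∞} {s R₀ : ℝ} {c M : ℝ≥0∞}
    (hs : 1 < s) (hR₀ : 0 < R₀) (hc : c < 1) (hM : M ≠ ∞)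
    (hstep : ∀ r, R₀ ≤ r → W (r * s) ≤ c * W r) (hbdd : ∀ r ∈ Ico R₀ (R₀ * s), W r ≤ M) :
    Tendsto W atTop (𝓝 0) := by
  have hdecay : Tendsto (fun n : ℕ => c ^ n * M) atTop (𝓝 0) := by
    simpa using
      ENNReal.Tendsto.mul_const (ENNReal.tendsto_pow_atTop_nhds_zero_of_lt_one hc) (Or.inr hM)
  rw [ENNReal.tendsto_nhds_zero]
  intro ε hε
  obtain ⟨n, hn⟩ := (hdecay.eventually_lt_const hε).exists
  filter_upwards [eventually_ge_atTop (R₀ * s ^ n)] with r hr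
  obtain ⟨m, hnm, hm⟩ := exists_le_div_pow_mem_Ico hR₀ hs hr
  calc W r = W (r / s ^ m * s ^ m) := by rw [div_mul_cancel₀ _ (by positivity)]
    _ ≤ c ^ m * W (r / s ^ m) := le_pow_mul_of_le_mul_comp_mul hs.le hR₀.le hstep m _ hm.1
    _ ≤ c ^ n * M := mul_le_mul' (pow_le_pow_right_of_le_one' hc.le hnm) (hbdd _ hm)
    _ ≤ ε := hn.le

theorem div_rpow_mul_le_mul_div_rpow {a b c : ℝ≥0∞} {r s β : ℝ} (hr : 0 ≤ r) (hs : 0 < s)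
    (h : a ≤ c * ENNReal.ofReal (s ^ β) * b) :
    a / ENNReal.ofReal ((r * s) ^ β) ≤ c * (b / ENNReal.ofReal (r ^ β)) := by
  have hsβ : ENNReal.ofReal (s ^ β) ≠ 0 :=
    (ENNReal.ofReal_pos.mpr (Real.rpow_pos_of_pos hs β)).ne'
  calc a / ENNReal.ofReal ((r * s) ^ β)
      = a / (ENNReal.ofReal (r ^ β) * ENNReal.ofReal (s ^ β)) := by
        rw [Real.mul_rpow hr hs.le, ENNReal.ofReal_mul (by positivity)]
    _ ≤ c * ENNReal.ofReal (s ^ β) * b / (ENNReal.ofReal (r ^ β) * ENNReal.ofReal (s ^ β)) :=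
        by gcongr
    _ = c * (b / ENNReal.ofReal (r ^ β)) := by
        rw [mul_right_comm c, ENNReal.mul_div_mul_right _ _ hsβ ENNReal.ofReal_ne_top, mul_div_assoc]

-- The paper's `RV(s)` when `V r = μ(B_r(p))`.
noncomputable def relGrowth (V : ℝ → ℝ≥0∞) (s : ℝ) : ℝ≥0∞ :=
  limsup (fun r => V (r * s) / V r) atTop

theorem Monotone.ne_top_of_eventually_ne_top {V : ℝ → ℝ≥0∞} (hV : Monotone V)
    (hfin : ∀ᶠ r in atTop, V r ≠ ∞) (r : ℝ) : V r ≠ ∞ := by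
  obtain ⟨R, hR_fin, hrR⟩ := (hfin.and (eventually_ge_atTop r)).exists
  exact ne_top_of_le_ne_top hR_fin (hV hrR)

theorem tendsto_div_rpow_of_liminf_relGrowth_lt_one {V : ℝ → ℝ≥0∞} (hV : Monotone V)
    (hfin : ∀ᶠ r in atTop, V r ≠ ∞) {β : ℝ} (hβ : 0 ≤ β)
    (h : liminf (fun s => relGrowth V s / ENNReal.ofReal (s ^ β)) atTop < 1) :
    Tendsto (fun r => V r / ENNReal.ofReal (r ^ β)) atTop (𝓝 0) := by
  obtain ⟨c, h_lt_c, hc⟩ := exists_between h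
  obtain ⟨s, hs, hsc⟩ :=
    ((eventually_gt_atTop 1).and_frequently (frequently_lt_of_liminf_lt (h := h_lt_c))).exists
  have hK : relGrowth V s < c * ENNReal.ofReal (s ^ β) := by
    refine (ENNReal.div_lt_iff (Or.inl ?_) (Or.inl ENNReal.ofReal_ne_top)).mp hsc
    exact (ENNReal.ofReal_pos.mpr (Real.rpow_pos_of_pos (by linarith) β)).ne'
  obtain ⟨R₀, hR₀⟩ := eventually_atTop.mp
    ((eventually_gt_atTop 0).and (eventually_lt_of_limsup_lt hK))
  have hR₀_pos : 0 < R₀ := (hR₀ R₀ le_rfl).1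
  refine tendsto_zero_of_le_mul_comp_mul hs hR₀_pos hc
    (M := V (R₀ * s) / ENNReal.ofReal (R₀ ^ β)) ?_ (fun r hr => ?_) (fun r hr => ?_)
  · exact ENNReal.div_ne_top (hV.ne_top_of_eventually_ne_top hfin _)
      (ENNReal.ofReal_pos.mpr (Real.rpow_pos_of_pos hR₀_pos β)).ne'
  · refine div_rpow_mul_le_mul_div_rpow (by linarith) (by linarith) ?_
    exact ENNReal.le_mul_of_div_lt (hR₀ r hr).2
      (ENNReal.mul_ne_top hc.ne_top ENNReal.ofReal_ne_top)
  · exact ENNReal.div_le_div (hV hr.2.le)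
      (ENNReal.ofReal_le_ofReal (Real.rpow_le_rpow hR₀_pos.le hr.1 hβ))

theorem rel_volume_growth_controls_abs_volume_growth_general
    {X : Type*} [MetricSpace X] [MeasurableSpace X]
    (μ : Measure X) (p : X)
    (hfin : ∀ r : ℝ, 0 < r → μ (ball p r) < ⊤)
    (β : ℝ) (hβ : 0 < β) (L : ℝ≥0∞) (hL : L < 1)
    (hliminf :
      liminf (fun s : ℝ =>
        (limsup (fun r : ℝ => μ (ball p (r * s)) / μ (ball p r)) atTop)
          / ENNReal.ofReal (s ^ β)) atTop = L) :
    Tendsto (fun r : ℝ => μ (ball p r) / ENNReal.ofReal (r ^ β)) atTop (nhds 0) :=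
  tendsto_div_rpow_of_liminf_relGrowth_lt_one (fun _ _ h => measure_mono (ball_subset_ball h))
    ((eventually_gt_atTop 0).mono fun r hr => (hfin r hr).ne) hβ.le (hliminf ▸ hL)

/-- **Relative volume growth controls absolute volume growth.**
Let `μ` be a Borel measure on a metric space such that all balls around a base
point `p` of positive radius have positive finite measure, and let `β > 0`.
If `liminf_{s→∞} RV(s)/s^β = L < 1`, where
`RV(s) = limsup_{r→∞} μ(B_{rs}(p))/μ(B_r(p))`, then
`lim_{r→∞} μ(B_r(p))/r^β = 0`. -/
theorem rel_volume_growth_controls_abs_volume_growth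
    {X : Type*} [MetricSpace X] [MeasurableSpace X] [BorelSpace X]
    (μ : Measure X) (p : X)
    (hpos : ∀ r : ℝ, 0 < r → 0 < μ (ball p r))
    (hfin : ∀ r : ℝ, 0 < r → μ (ball p r) < ⊤)
    (β : ℝ) (hβ : 0 < β) (L : ℝ≥0∞) (hL : L < 1)
    (hliminf :
      liminf (fun s : ℝ =>
        (limsup (fun r : ℝ => μ (ball p (r * s)) / μ (ball p r)) atTop)
          / ENNReal.ofReal (s ^ β)) atTop = L) :
    Tendsto (fun r : ℝ => μ (ball p r) / ENNReal.ofReal (r ^ β)) atTop (nhds 0) :=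
  rel_volume_growth_controls_abs_volume_growth_general μ p hfin β hβ L hL hliminf
end

section
/- Let N > 1 be a real number and let ρ : (0,∞) → (0,∞) be such that the function r ↦ ρ(r)^{1/N} is concave on (0,∞), and suppose ρ(r)/r → 0 as r → ∞. Let D : (0,∞) → ℝ be a function such that for every r > 0, D(r) is the right derivative of ρ at r (i.e., HasDerivWithinAt ρ (D r) (Ioi r) r for all r > 0). Then D(r) → 0 as r → ∞. -/
/-!
Write `g = ρ ^ (1/N)`, so that `g' = (1/N) ρ^(1/N - 1) ρ'` on the right. Being concave and positive
on `(0, ∞)`, `g` is nondecreasing, so `ρ' ≥ 0`; and its right derivative at `r` is at most the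
chord slope of `g` over `[r/2, r]`, which is at most `2 g(r) / r`. This gives
`0 ≤ ρ'(r) ≤ 2 N ρ(r) / r`, and the right-hand side tends to `0`.
-/

open Set Filter Topology

namespace ConcaveOn

variable {S : Set ℝ} {f : ℝ → ℝ}

/-- A decrease `f y < f x` at `x < y` would keep `f` below a line of negative slope beyond `y`. -/
theorem monotoneOn_of_bddBelow (hf : ConcaveOn ℝ S f) (hS : ¬BddAbove S)
    (hb : BddBelow (f '' S)) : MonotoneOn f S := by
  intro x hx y hy hxy
  rcases hxy.eq_or_lt with rfl | hxy
  · rfl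
  by_contra! hdec
  obtain ⟨m, hm⟩ := hb
  set c := slope f x y with hc
  have hc_neg : c < 0 := by
    rw [hc, slope_def_field]
    exact div_neg_of_neg_of_pos (by linarith) (by linarith)
  have hmy : m ≤ f y := hm (mem_image_of_mem f hy)
  obtain ⟨z, hz, hz_gt⟩ := not_bddAbove_iff.mp hS (y + (f y - m) / -c)
  have hyz : y < z := by
    have : 0 ≤ (f y - m) / -c := div_nonneg (sub_nonneg.mpr hmy) (neg_pos.mpr hc_neg).le
    linarith
  have hslope : slope f y z ≤ c := by
    rw [hc, slope_comm f x y]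
    exact hf.slope_anti hy ⟨hx, hxy.ne⟩ ⟨hz, hyz.ne'⟩ (hxy.trans hyz).le
  have hfz : f z ≤ f y + c * (z - y) := by
    rw [slope_def_field, div_le_iff₀ (by linarith)] at hslope
    linarith
  have hgap : f y - m < -c * (z - y) := by
    rwa [← lt_sub_iff_add_lt', div_lt_iff₀ (neg_pos.mpr hc_neg), mul_comm] at hz_gt
  linarith [hm (mem_image_of_mem f hz)]

theorem hasDerivWithinAt_Ioi_le_slope {x y f' : ℝ} (hf : ConcaveOn ℝ S f) (hx : x ∈ S)
    (hy : y ∈ S) (hxy : x < y) (hS : S ∈ 𝓝[>] y)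
    (hf' : HasDerivWithinAt f f' (Ioi y) y) : f' ≤ slope f x y := by
  refine le_of_tendsto ((hasDerivWithinAt_iff_tendsto_slope' (notMem_Ioi.mpr le_rfl)).mp hf') ?_
  filter_upwards [hS, self_mem_nhdsWithin] with t ht (hyt : y < t)
  rw [slope_comm f x y]
  exact hf.slope_anti hy ⟨hx, hxy.ne⟩ ⟨ht, hyt.ne'⟩ (hxy.trans hyt).le

end ConcaveOn

section RootConcave

variable {N : ℝ} {ρ : ℝ → ℝ} {r ρ' : ℝ}

theorem nonneg_of_hasDerivWithinAt_Ioi_of_concaveOn_rpow (hN : 0 < N)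
    (hpos : ∀ t ∈ Ioi (0 : ℝ), 0 < ρ t) (hconc : ConcaveOn ℝ (Ioi 0) (fun t => ρ t ^ (1 / N)))
    (hr : 0 < r) (hρ' : HasDerivWithinAt ρ ρ' (Ioi r) r) : 0 ≤ ρ' := by
  have hmono : MonotoneOn (fun t => ρ t ^ (1 / N)) (Ioi 0) :=
    hconc.monotoneOn_of_bddBelow (not_bddAbove_Ioi 0)
      ⟨0, by rintro _ ⟨t, ht, rfl⟩; exact Real.rpow_nonneg (hpos t ht).le _⟩
  have hacc : AccPt r (𝓟 (Ioi r)) := by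
    simpa [accPt_principal_iff_nhdsWithin] using nhdsGT_neBot r
  have h := (hρ'.rpow_const (Or.inl (hpos r hr).ne')).nonneg_of_monotoneOn hacc
    (hmono.mono (Ioi_subset_Ioi hr.le))
  have hρr := hpos r hr
  exact nonneg_of_mul_nonneg_left (nonneg_of_mul_nonneg_left h (by positivity)) (by positivity)

theorem le_of_hasDerivWithinAt_Ioi_of_concaveOn_rpow (hN : 0 < N)
    (hpos : ∀ t ∈ Ioi (0 : ℝ), 0 < ρ t) (hconc : ConcaveOn ℝ (Ioi 0) (fun t => ρ t ^ (1 / N)))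
    (hr : 0 < r) (hρ' : HasDerivWithinAt ρ ρ' (Ioi r) r) : ρ' ≤ 2 * N * (ρ r / r) := by
  have hρr := hpos r hr
  have hslope := hconc.hasDerivWithinAt_Ioi_le_slope (half_pos hr) hr (half_lt_self hr)
    (mem_nhdsWithin_of_mem_nhds (Ioi_mem_nhds hr)) (hρ'.rpow_const (Or.inl hρr.ne'))
  have hchord :
      slope (fun t => ρ t ^ (1 / N)) (r / 2) r ≤ 2 * (ρ r / r) * ρ r ^ (1 / N - 1) := by
    have := Real.rpow_nonneg (hpos (r / 2) (half_pos hr)).le (1 / N)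
    rw [slope_def_field, Real.rpow_sub_one hρr.ne', div_le_iff₀ (by linarith)]
    field_simp
    linarith
  have hp : 0 < ρ r ^ (1 / N - 1) := Real.rpow_pos_of_pos hρr _
  have h := le_of_mul_le_mul_right (hslope.trans hchord) hp
  rw [mul_one_div, div_le_iff₀ hN] at h
  linarith

end RootConcave

/-- **Step 1 of the sub-quadratic volume lemma.** If `N > 1`, `ρ : (0,∞) → (0,∞)`
has concave `N`-th root on `(0,∞)` and satisfies `ρ(r)/r → 0` as `r → ∞`, then
the right derivative of `ρ` tends to `0` at infinity. -/
theorem cd_density_right_deriv_tendsto_zero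
    (N : ℝ) (hN : 1 < N) (ρ : ℝ → ℝ)
    (hpos : ∀ r ∈ Ioi (0:ℝ), 0 < ρ r)
    (hconc : ConcaveOn ℝ (Ioi 0) (fun r => ρ r ^ (1 / N)))
    (hsub : Tendsto (fun r : ℝ => ρ r / r) atTop (nhds 0))
    (D : ℝ → ℝ)
    (hD : ∀ r ∈ Ioi (0:ℝ), HasDerivWithinAt ρ (D r) (Ioi r) r) :
    Tendsto D atTop (nhds 0) := by
  have hN0 : 0 < N := by linarith
  refine tendsto_of_tendsto_of_tendsto_of_le_of_le' tendsto_const_nhds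
    (by simpa using hsub.const_mul (2 * N)) ?_ ?_
  · filter_upwards [eventually_gt_atTop 0] with r hr
    exact nonneg_of_hasDerivWithinAt_Ioi_of_concaveOn_rpow hN0 hpos hconc hr (hD r hr)
  · filter_upwards [eventually_gt_atTop 0] with r hr
    exact le_of_hasDerivWithinAt_Ioi_of_concaveOn_rpow hN0 hpos hconc hr (hD r hr)
end

section
/- Let N > 1 be a real number, and let (δ_k)_{k≥0} and (ε_k)_{k≥0} be sequences of real numbers such that 0 < δ_0 ≤ 1, δ_k > 0 for all k, 0 ≤ ε_k ≤ min(δ_k^{1/(N−1)}, 0.1) for all k, and 2·δ_{k+1} ≤ δ_k·(1 + ε_k) for all k. Then for all k ≥ 0: δ_k ≤ 0.55^k·δ_0, and moreover 2^k·δ_k ≤ δ_0·exp( δ_0^{1/(N−1)} / (1 − 0.55^{1/(N−1)}) ). -/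
/-!
Since `ε_k ≤ 0.1`, each step at least shrinks `δ` by the factor `1.1 / 2 = 0.55`, so `δ_k ≤ 0.55^k δ_0`
and hence `ε_k ≤ δ_k^{1/(N-1)} ≤ δ_0^{1/(N-1)} (0.55^{1/(N-1)})^k` decays geometrically. Multiplying
the recursion out and using `1 + x ≤ exp x` gives `2^k δ_k ≤ δ_0 exp(ε_0 + ⋯ + ε_{k-1})`, and the
geometric series bounds the exponent.
-/

open Real Finset

theorem le_mul_exp_sum_of_le_mul_one_add {u e : ℕ → ℝ} (hu : ∀ k, 0 ≤ u k)
    (h : ∀ k, u (k + 1) ≤ u k * (1 + e k)) (k : ℕ) :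
    u k ≤ u 0 * exp (∑ i ∈ range k, e i) := by
  induction k with
  | zero => simp
  | succ k ih =>
    calc u (k + 1) ≤ u k * (1 + e k) := h k
      _ ≤ u k * exp (e k) := mul_le_mul_of_nonneg_left (by linarith [add_one_le_exp (e k)]) (hu k)
      _ ≤ u 0 * exp (∑ i ∈ range k, e i) * exp (e k) := by gcongr
      _ = u 0 * exp (∑ i ∈ range (k + 1), e i) := by rw [sum_range_succ, exp_add, mul_assoc]

theorem sum_range_le_div_one_sub_of_le_geom {e : ℕ → ℝ} {c r : ℝ} (hc : 0 ≤ c) (hr₀ : 0 ≤ r)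
    (hr₁ : r < 1) (he : ∀ i, e i ≤ c * r ^ i) (k : ℕ) :
    ∑ i ∈ range k, e i ≤ c / (1 - r) :=
  calc ∑ i ∈ range k, e i ≤ c * ∑ i ∈ range k, r ^ i := by
        rw [mul_sum]; exact sum_le_sum fun i _ ↦ he i
    _ ≤ c * (1 / (1 - r)) := by
        have := geom_sum_Ico_le_of_lt_one (m := 0) (n := k) hr₀ hr₁
        rw [← range_eq_Ico, pow_zero] at this
        exact mul_le_mul_of_nonneg_left this hc
    _ = c / (1 - r) := mul_one_div c (1 - r)

theorem rpow_le_rpow_mul_geom {x a b p : ℝ} {i : ℕ} (hx : 0 ≤ x) (ha : 0 ≤ a) (hb : 0 ≤ b)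
    (hp : 0 ≤ p) (h : x ≤ a ^ i * b) : x ^ p ≤ b ^ p * (a ^ p) ^ i :=
  calc x ^ p ≤ (a ^ i * b) ^ p := rpow_le_rpow hx h hp
    _ = b ^ p * (a ^ p) ^ i := by
        rw [mul_rpow (pow_nonneg ha i) hb, rpow_pow_comm ha, mul_comm]

theorem halving_iteration_estimate_general
    (N : ℝ) (hN : 1 < N) (δ ε : ℕ → ℝ)
    (hδpos : ∀ k, 0 < δ k)
    (hεle : ∀ k, ε k ≤ min (δ k ^ (1 / (N - 1))) 0.1)
    (hrec : ∀ k, 2 * δ (k + 1) ≤ δ k * (1 + ε k)) :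
    ∀ k : ℕ, δ k ≤ (0.55 : ℝ) ^ k * δ 0 ∧
      (2 : ℝ) ^ k * δ k ≤
        δ 0 * Real.exp (δ 0 ^ (1 / (N - 1)) / (1 - (0.55 : ℝ) ^ (1 / (N - 1)))) := by
  set p := 1 / (N - 1)
  have hp : 0 < p := one_div_pos.2 (sub_pos.2 hN)
  have hstep : ∀ k, δ (k + 1) ≤ 0.55 * δ k := fun k ↦ by
    nlinarith [hrec k, hδpos k, (hεle k).trans (min_le_right _ _)]
  have hdecay : ∀ k, δ k ≤ (0.55 : ℝ) ^ k * δ 0 := fun k ↦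
    le_geom (by norm_num) k fun i _ ↦ hstep i
  have hεgeom : ∀ i, ε i ≤ δ 0 ^ p * ((0.55 : ℝ) ^ p) ^ i := fun i ↦
    (hεle i).trans <| (min_le_left _ _).trans <|
      rpow_le_rpow_mul_geom (hδpos i).le (by norm_num) (hδpos 0).le hp.le (hdecay i)
  have hmul : ∀ k, (2 : ℝ) ^ k * δ k ≤ δ 0 * exp (∑ i ∈ range k, ε i) := by
    simpa using le_mul_exp_sum_of_le_mul_one_add (u := fun k ↦ 2 ^ k * δ k)
      (fun k ↦ mul_nonneg (by positivity) (hδpos k).le) fun k ↦ by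
        rw [pow_succ, mul_assoc, mul_assoc]
        exact mul_le_mul_of_nonneg_left (hrec k) (by positivity)
  have hsum : ∀ k, ∑ i ∈ range k, ε i ≤ δ 0 ^ p / (1 - (0.55 : ℝ) ^ p) :=
    sum_range_le_div_one_sub_of_le_geom (rpow_nonneg (hδpos 0).le p)
      (rpow_nonneg (by norm_num) p) (rpow_lt_one (by norm_num) (by norm_num) hp) hεgeom
  exact fun k ↦ ⟨hdecay k,
    (hmul k).trans (mul_le_mul_of_nonneg_left (exp_le_exp.2 (hsum k)) (hδpos 0).le)⟩

/-- **Iteration estimate behind the halving estimate (Abresch–Gromoll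
bootstrap).** Let `N > 1` and let `(δ_k)`, `(ε_k)` be sequences with
`0 < δ_0 ≤ 1`, `δ_k > 0`, `0 ≤ ε_k ≤ min(δ_k^{1/(N-1)}, 0.1)` and
`2·δ_{k+1} ≤ δ_k·(1 + ε_k)`. Then `δ_k ≤ 0.55^k·δ_0` and
`2^k·δ_k ≤ δ_0·exp(δ_0^{1/(N-1)} / (1 − 0.55^{1/(N-1)}))` for every `k`. -/
theorem halving_iteration_estimate
    (N : ℝ) (hN : 1 < N) (δ ε : ℕ → ℝ)
    (hδ0 : 0 < δ 0) (hδ01 : δ 0 ≤ 1)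
    (hδpos : ∀ k, 0 < δ k)
    (hεnn : ∀ k, 0 ≤ ε k)
    (hεle : ∀ k, ε k ≤ min (δ k ^ (1 / (N - 1))) 0.1)
    (hrec : ∀ k, 2 * δ (k + 1) ≤ δ k * (1 + ε k)) :
    ∀ k : ℕ, δ k ≤ (0.55 : ℝ) ^ k * δ 0 ∧
      (2 : ℝ) ^ k * δ k ≤
        δ 0 * Real.exp (δ 0 ^ (1 / (N - 1)) / (1 - (0.55 : ℝ) ^ (1 / (N - 1)))) :=
  halving_iteration_estimate_general N hN δ ε hδpos hεle hrec
end

section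
/- Let N > 1 be a real number and ρ : (0,∞) → (0,∞) a function such that r ↦ ρ(r)^{1/N} is concave on (0,∞), and suppose ρ(r)/r → ∞ as r → 0⁺. Let L : (0,∞) → ℝ be a function such that for every x > 0, L(x) is the right derivative of x ↦ log ρ(x) at x (i.e., HasDerivWithinAt (log ∘ ρ) (L x) (Ioi x) x for all x > 0; such L exists since log ρ is concave). Let f : (0,∞) → (0,∞) and let b : (0,∞) → ℝ be locally square-integrable on (0,∞) such that: (i) log f(t) − log f(s) = ∫_s^t b(u) du for all 0 < s < t; and (ii) ∫_s^t b(u)² du ≤ L(s) − L(t) for all 0 < s < t. Then f(r)/r → ∞ as r → 0⁺. -/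
/-!
Write `g = log ρ`; it is concave with right derivative `L`, so `(t - s) L(t) ≤ g(t) - g(s)`, and
`r L(r) ≤ N` because the positive concave function `ρ^{1/N}` has right derivative
`ρ^{1/N} L / N` at `r`, which is at most `ρ^{1/N}(r) / r`.

On a piece `[s, t]`, integrating `2|b| ≤ s b² + 1/s` and using (ii) gives
`2 ∫_s^t |b| ≤ (t - s)/s + s (L(s) - L(t))`. Summing over a geometric partition
`r = t₀ < ⋯ < tₙ = 1`, the first terms form a Riemann sum for `∫_r^1 ds/s = -log r`, within `1`
of it once `n ≥ log² r`, while summation by parts bounds the second ones by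
`r L(r) - L(1) + g(1) - g(r) ≤ N - L(1) + g(1) - log r - log (ρ(r)/r)`. Hence
`2 log (f(r)/r) ≥ log (ρ(r)/r) - C`, and the right side tends to `∞`.
-/

open Set Filter intervalIntegral Real MeasureTheory Topology

theorem ConcaveOn.log {E : Type*} [AddCommGroup E] [Module ℝ E] {s : Set E} {h : E → ℝ}
    (hh : ConcaveOn ℝ s h) (hpos : ∀ x ∈ s, 0 < h x) :
    ConcaveOn ℝ s (fun x => Real.log (h x)) := by
  refine ⟨hh.1, fun x hx y hy a c ha hc hac => ?_⟩
  calc a • Real.log (h x) + c • Real.log (h y) ≤ Real.log (a • h x + c • h y) :=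
        strictConcaveOn_log_Ioi.concaveOn.2 (hpos x hx) (hpos y hy) ha hc hac
    _ ≤ Real.log (h (a • x + c • y)) :=
        log_le_log ((convex_Ioi (0 : ℝ)) (hpos x hx) (hpos y hy) ha hc hac)
          (hh.2 hx hy ha hc hac)

theorem concaveOn_log_of_concaveOn_rpow {E : Type*} [AddCommGroup E] [Module ℝ E] {s : Set E}
    {ρ : E → ℝ} {N : ℝ} (hN : 0 < N) (hpos : ∀ x ∈ s, 0 < ρ x)
    (hconc : ConcaveOn ℝ s (fun x => ρ x ^ (1 / N))) :
    ConcaveOn ℝ s (fun x => log (ρ x)) :=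
  ((hconc.log fun x hx => rpow_pos_of_pos (hpos x hx) _).smul hN.le).congr fun x hx => by
    simp only [smul_eq_mul, log_rpow (hpos x hx)]
    field_simp

theorem ConcaveOn.le_slope_of_hasDerivWithinAt_Ioi {s : Set ℝ} {f : ℝ → ℝ} {x y f' : ℝ}
    (hfc : ConcaveOn ℝ s f) (hx : x ∈ s) (hy : y ∈ interior s) (hxy : x < y)
    (hf' : HasDerivWithinAt f f' (Ioi y) y) : f' ≤ slope f x y := by
  apply le_of_tendsto ((hasDerivWithinAt_iff_tendsto_slope' self_notMem_Ioi).mp hf')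
  filter_upwards [nhdsWithin_le_nhds (mem_interior_iff_mem_nhds.mp hy), self_mem_nhdsWithin]
    with z hzs (hyz : y < z)
  rw [slope_comm f x y]
  exact hfc.slope_anti (interior_subset hy) ⟨hx, hxy.ne⟩ ⟨hzs, hyz.ne'⟩ (hxy.trans hyz).le

theorem ConcaveOn.mul_le_of_hasDerivWithinAt_Ioi {h : ℝ → ℝ} {h' r : ℝ}
    (hh : ConcaveOn ℝ (Ioi 0) h) (hnonneg : ∀ s ∈ Ioi 0, 0 ≤ h s) (hr : 0 < r)
    (hd : HasDerivWithinAt h h' (Ioi r) r) : r * h' ≤ h r := by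
  have hsecant : ∀ s ∈ Ioo 0 r, h' * (r - s) ≤ h r := fun s hs => by
    have := hh.le_slope_of_hasDerivWithinAt_Ioi hs.1 (by simpa using hr) hs.2 hd
    rw [slope_def_field, le_div_iff₀ (sub_pos.2 hs.2)] at this
    linarith [hnonneg s hs.1]
  have hlim : Tendsto (fun s => h' * (r - s)) (𝓝[>] 0) (𝓝 (r * h')) :=
    ((by fun_prop : Continuous fun s => h' * (r - s)).tendsto' 0 _ (by ring)).mono_left
      nhdsWithin_le_nhds
  exact le_of_tendsto hlim (eventually_of_mem (Ioo_mem_nhdsGT hr) hsecant)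

theorem mul_le_of_hasDerivWithinAt_log_of_concaveOn_rpow {ρ : ℝ → ℝ} {N L r : ℝ} (hN : 0 < N)
    (hpos : ∀ x ∈ Ioi (0 : ℝ), 0 < ρ x) (hconc : ConcaveOn ℝ (Ioi 0) fun x => ρ x ^ (1 / N))
    (hr : 0 < r) (hL : HasDerivWithinAt (fun y => log (ρ y)) L (Ioi r) r) : r * L ≤ N := by
  have hd : HasDerivWithinAt (fun y => ρ y ^ (1 / N)) (ρ r ^ (1 / N) * (L * (1 / N)))
      (Ioi r) r := by
    rw [rpow_def_of_pos (hpos r hr)]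
    exact (hL.mul_const _).exp.congr (fun y hy => rpow_def_of_pos (hpos y (hr.trans hy)) _)
      (rpow_def_of_pos (hpos r hr) _)
  rw [← div_le_one hN, ← mul_le_mul_iff_of_pos_left (rpow_pos_of_pos (hpos r hr) (1 / N)),
    mul_one]
  calc _ = r * (ρ r ^ (1 / N) * (L * (1 / N))) := by ring
    _ ≤ _ := hconc.mul_le_of_hasDerivWithinAt_Ioi
      (fun s hs => (rpow_pos_of_pos (hpos s hs) _).le) hr hd

theorem MeasureTheory.LocallyIntegrableOn.intervalIntegrable_of_lt {f : ℝ → ℝ} {c a b : ℝ}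
    (hf : LocallyIntegrableOn f (Ioi c)) (ha : c < a) (hb : c < b) :
    IntervalIntegrable f volume a b :=
  (hf.integrableOn_compact_subset (fun _ hu => lt_of_lt_of_le (lt_min ha hb) hu.1)
    isCompact_uIcc).intervalIntegrable

/-- `b` itself need not be measurable, but `|b| = √(b²)` is. -/
theorem IntervalIntegrable.abs_of_sq {b : ℝ → ℝ} {s t : ℝ}
    (hb : IntervalIntegrable (fun u => b u ^ 2) volume s t) :
    IntervalIntegrable (fun u => |b u|) volume s t := by
  refine (hb.add (intervalIntegrable_const (c := (1 : ℝ)))).mono_fun' ?_ ?_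
  · simpa only [sqrt_sq_eq_abs] using
      continuous_sqrt.comp_aestronglyMeasurable hb.def'.aestronglyMeasurable
  · refine ae_of_all _ fun u => ?_
    simp only [norm_eq_abs, abs_abs]
    nlinarith [sq_abs (b u), sq_nonneg (|b u| - 1)]

theorem two_mul_integral_le_mul_integral_sq_add {b : ℝ → ℝ} {s t c : ℝ} (hst : s ≤ t)
    (hc : 0 < c) (hb : IntervalIntegrable b volume s t)
    (hb2 : IntervalIntegrable (fun u => b u ^ 2) volume s t) :
    2 * (∫ u in s..t, b u) ≤ c * (∫ u in s..t, b u ^ 2) + (t - s) / c := by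
  have hamgm : ∀ u, 2 * b u ≤ c * b u ^ 2 + c⁻¹ := fun u => by
    have := div_nonneg (sq_nonneg (c * b u - 1)) hc.le
    rw [show (c * b u - 1) ^ 2 / c = c * b u ^ 2 + c⁻¹ - 2 * b u by field_simp; ring] at this
    linarith
  calc 2 * (∫ u in s..t, b u) = ∫ u in s..t, 2 * b u :=
        (intervalIntegral.integral_const_mul _ _).symm
    _ ≤ ∫ u in s..t, (c * b u ^ 2 + c⁻¹) :=
      integral_mono_on hst (hb.const_mul 2) ((hb2.const_mul c).add intervalIntegrable_const)
        fun u _ => hamgm u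
    _ = c * (∫ u in s..t, b u ^ 2) + (t - s) / c := by
      rw [integral_add (hb2.const_mul c) intervalIntegrable_const,
        intervalIntegral.integral_const_mul, intervalIntegral.integral_const, smul_eq_mul,
        div_eq_mul_inv]

theorem two_mul_integral_abs_le_sum_of_strictMono {b L g : ℝ → ℝ}
    (hb : LocallyIntegrableOn (fun u => b u ^ 2) (Ioi 0))
    (hbL : ∀ s t, 0 < s → s < t → (∫ u in s..t, b u ^ 2) ≤ L s - L t)
    (hgL : ∀ s t, 0 < s → s < t → (t - s) * L t ≤ g t - g s)
    {t : ℕ → ℝ} (ht : StrictMono t) (ht0 : 0 < t 0) (n : ℕ) :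
    2 * (∫ u in t 0..t n, |b u|) ≤ ∑ k ∈ Finset.range n, (t (k + 1) - t k) / t k
      + (t 0 * L (t 0) - t n * L (t n)) + (g (t n) - g (t 0)) := by
  have htpos : ∀ k, 0 < t k := fun k => ht0.trans_le (ht.monotone k.zero_le)
  have hint : ∀ k l, IntervalIntegrable (fun u => b u ^ 2) volume (t k) (t l) := fun k l =>
    hb.intervalIntegrable_of_lt (htpos k) (htpos l)
  induction n with
  | zero => simp
  | succ n ih =>
    have hlt : t n < t (n + 1) := ht n.lt_add_one
    have hpiece : 2 * (∫ u in t n..t (n + 1), |b u|)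
        ≤ t n * (∫ u in t n..t (n + 1), b u ^ 2) + (t (n + 1) - t n) / t n := by
      simpa only [sq_abs] using two_mul_integral_le_mul_integral_sq_add hlt.le (htpos n)
        (hint n (n + 1)).abs_of_sq (by simpa only [sq_abs] using hint n (n + 1))
    have hL := mul_le_mul_of_nonneg_left (hbL _ _ (htpos n) hlt) (htpos n).le
    have hg := hgL _ _ (htpos n) hlt
    rw [← integral_add_adjacent_intervals (hint 0 n).abs_of_sq (hint n (n + 1)).abs_of_sq,
      Finset.sum_range_succ]
    linarith

theorem natCast_mul_exp_div_sub_one_le {x : ℝ} {n : ℕ} (hx : 0 ≤ x) (hxn : x ≤ n)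
    (hx2 : x ^ 2 ≤ n) : n * (exp (x / n) - 1) ≤ x + 1 := by
  rcases n.eq_zero_or_pos with rfl | hn
  · norm_num
    linarith
  have hn' : (0 : ℝ) < n := Nat.cast_pos.2 hn
  have hy : |x / n| ≤ 1 := by
    rw [abs_of_nonneg (by positivity), div_le_one hn']
    exact hxn
  have hexp := (abs_le.1 (abs_exp_sub_one_sub_id_le hy)).2
  calc (n : ℝ) * (exp (x / n) - 1) ≤ n * (x / n + (x / n) ^ 2) := by gcongr; linarith
    _ = x + x ^ 2 / n := by field_simp
    _ ≤ x + 1 := by gcongr; rwa [div_le_one hn']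

theorem two_mul_integral_abs_le_neg_log_add {b L g : ℝ → ℝ}
    (hb : LocallyIntegrableOn (fun u => b u ^ 2) (Ioi 0))
    (hbL : ∀ s t, 0 < s → s < t → (∫ u in s..t, b u ^ 2) ≤ L s - L t)
    (hgL : ∀ s t, 0 < s → s < t → (t - s) * L t ≤ g t - g s) {r : ℝ} (hr0 : 0 < r)
    (hr1 : r < 1) :
    2 * (∫ u in r..1, |b u|) ≤ -log r + 1 + (r * L r - L 1) + (g 1 - g r) := by
  set x := -log r
  have hx : 0 < x := neg_pos.2 (log_neg hr0 hr1)
  set n := ⌈x ^ 2⌉₊ + 1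
  have hx2 : x ^ 2 + 1 ≤ n := by push_cast [n]; linarith [Nat.le_ceil (x ^ 2)]
  have hn : (0 : ℝ) < n := by positivity
  set q := exp (x / n)
  have hq : 1 < q := one_lt_exp_iff.2 (by positivity)
  have ht : StrictMono fun k : ℕ => r * q ^ k := fun i j hij =>
    mul_lt_mul_of_pos_left (pow_lt_pow_right₀ hq hij) hr0
  have hend : r * q ^ n = 1 := by
    rw [← exp_nat_mul, mul_div_cancel₀ _ hn.ne', exp_neg, exp_log hr0, mul_inv_cancel₀ hr0.ne']
  have hsum : ∑ k ∈ Finset.range n, (r * q ^ (k + 1) - r * q ^ k) / (r * q ^ k)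
      = n * (q - 1) := by
    rw [Finset.sum_congr rfl fun k _ =>
      show (r * q ^ (k + 1) - r * q ^ k) / (r * q ^ k) = q - 1 by field_simp; ring]
    simp only [Finset.sum_const, Finset.card_range, nsmul_eq_mul]
  have hpart := two_mul_integral_abs_le_sum_of_strictMono hb hbL hgL ht (by simpa using hr0) n
  simp only [pow_zero, mul_one, hend, hsum] at hpart
  linarith [natCast_mul_exp_div_sub_one_le hx.le (by nlinarith) (by linarith : x ^ 2 ≤ n)]

/-- **Superlinear density forces superlinear warping function
(Lemma fSuperlinear).** Let `N > 1` and `ρ : (0,∞) → (0,∞)` with `ρ^{1/N}`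
concave on `(0,∞)` and `ρ(r)/r → ∞` as `r → 0⁺`. Let `L(x)` be the right
derivative of `log ρ` at each `x > 0`. Let `f : (0,∞) → (0,∞)` and let
`b` be locally square-integrable on `(0,∞)` with
`log f(t) − log f(s) = ∫_s^t b` and `∫_s^t b² ≤ L(s) − L(t)` for all
`0 < s < t`. Then `f(r)/r → ∞` as `r → 0⁺`. -/
theorem warping_superlinear_of_density_superlinear
    (N : ℝ) (hN : 1 < N) (ρ : ℝ → ℝ)
    (hρpos : ∀ r ∈ Ioi (0:ℝ), 0 < ρ r)
    (hconc : ConcaveOn ℝ (Ioi 0) (fun r => ρ r ^ (1 / N)))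
    (hρsuper : Tendsto (fun r : ℝ => ρ r / r) (nhdsWithin 0 (Ioi 0)) atTop)
    (L : ℝ → ℝ)
    (hL : ∀ x ∈ Ioi (0:ℝ),
      HasDerivWithinAt (fun y => Real.log (ρ y)) (L x) (Ioi x) x)
    (f : ℝ → ℝ) (hfpos : ∀ r ∈ Ioi (0:ℝ), 0 < f r)
    (b : ℝ → ℝ)
    (hb : MeasureTheory.LocallyIntegrableOn (fun u => (b u) ^ 2) (Ioi 0))
    (hlog : ∀ s t : ℝ, 0 < s → s < t →
      Real.log (f t) - Real.log (f s) = ∫ u in s..t, b u)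
    (hb2 : ∀ s t : ℝ, 0 < s → s < t →
      (∫ u in s..t, (b u) ^ 2) ≤ L s - L t) :
    Tendsto (fun r : ℝ => f r / r) (nhdsWithin 0 (Ioi 0)) atTop := by
  have hN0 : 0 < N := by linarith
  have hgL : ∀ s t, 0 < s → s < t → (t - s) * L t ≤ log (ρ t) - log (ρ s) := fun s t hs hst => by
    have := (concaveOn_log_of_concaveOn_rpow hN0 hρpos hconc).le_slope_of_hasDerivWithinAt_Ioi
      hs (by simpa using hs.trans hst) hst (hL t (hs.trans hst))
    rwa [slope_def_field, le_div_iff₀ (sub_pos.2 hst), mul_comm] at this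
  obtain ⟨c, hkey⟩ : ∃ c, ∀ r ∈ Ioo (0 : ℝ) 1, log (ρ r / r) + c ≤ 2 * log (f r / r) := by
    refine ⟨2 * log (f 1) - (1 + N - L 1 + log (ρ 1)), fun r ⟨hr0, hr1⟩ => ?_⟩
    have hint := two_mul_integral_abs_le_neg_log_add hb hb2 hgL hr0 hr1
    have habs : (∫ u in r..1, b u) ≤ ∫ u in r..1, |b u| :=
      (le_abs_self _).trans (abs_integral_le_integral_abs hr1.le)
    have hrL := mul_le_of_hasDerivWithinAt_log_of_concaveOn_rpow hN0 hρpos hconc hr0 (hL r hr0)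
    rw [log_div (hρpos r hr0).ne' hr0.ne', log_div (hfpos r hr0).ne' hr0.ne']
    linarith [hlog r 1 hr0 hr1]
  have hlogf : Tendsto (fun r => log (f r / r)) (𝓝[>] 0) atTop := by
    refine tendsto_atTop_mono' _ ?_ ((tendsto_atTop_add_const_right _ c
      (tendsto_log_atTop.comp hρsuper)).atTop_div_const two_pos)
    filter_upwards [Ioo_mem_nhdsGT one_pos] with r hr
    simp only [Function.comp_apply]
    linarith [hkey r hr]
  refine (tendsto_exp_atTop.comp hlogf).congr' ?_
  filter_upwards [self_mem_nhdsWithin] with r (hr : 0 < r)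
  exact exp_log (div_pos (hfpos r hr) hr)
end

section
/- Let f, ρ : (0,∞) → (0,∞) and let C ∈ ℝ. Suppose that for every r ∈ (0,1) one has log f(1) − log f(r) ≤ √(log(1/r)) · √(C − log ρ(r)), where √x is interpreted as 0 when x < 0. If ρ(r)/r → ∞ as r → 0⁺, then f(r)/r → ∞ as r → 0⁺. -/
/-!
Write `t = log (1/r)`. By AM-GM, `√t · √s ≤ (t + s) / 2`, so wherever the left side of
the estimate is positive it yields
`log (f r / r) ≥ (log (ρ r / r) + 2 log f(1) − C) / 2`,
and wherever it is not, `log (f r / r) ≥ log f(1) + t`.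
Both lower bounds tend to `∞` as `r → 0⁺`.
-/

open Set Filter Real

lemma two_mul_sub_le_of_le_sqrt_mul_sqrt {x t s : ℝ} (ht : 0 ≤ t) (hx : 0 < x)
    (h : x ≤ √t * √s) : 2 * x - t ≤ s := by
  have hs : 0 ≤ s := by
    by_contra! hs
    rw [sqrt_eq_zero_of_nonpos hs.le, mul_zero] at h
    linarith
  nlinarith [two_mul_le_add_sq (√t) (√s), sq_sqrt ht, sq_sqrt hs]

lemma min_le_log_div_of_le_sqrt_mul_sqrt {a C p q r : ℝ} (hr₀ : 0 < r) (hr₁ : r ≤ 1)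
    (hp : p ≠ 0) (hq : q ≠ 0) (h : a - log q ≤ √(log (1 / r)) * √(C - log p)) :
    min (a + log (1 / r)) ((2 * a - C + log (p / r)) / 2) ≤ log (q / r) := by
  have ht : 0 ≤ log (1 / r) := log_nonneg (one_le_one_div hr₀ hr₁)
  have hlog_one_div : log (1 / r) = -log r := by rw [one_div, log_inv]
  rw [log_div hp hr₀.ne', log_div hq hr₀.ne']
  rcases le_or_gt (a - log q) 0 with hx | hx
  · exact min_le_of_left_le (by linarith)
  · have := two_mul_sub_le_of_le_sqrt_mul_sqrt ht hx h
    exact min_le_of_right_le (by linarith)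

theorem superlinear_of_sqrt_log_estimate_general
    (f ρ : ℝ → ℝ) (C : ℝ)
    (hfpos : ∀ r ∈ Ioi (0:ℝ), 0 < f r)
    (hest : ∀ r ∈ Ioo (0:ℝ) 1,
      Real.log (f 1) - Real.log (f r) ≤
        Real.sqrt (Real.log (1 / r)) * Real.sqrt (C - Real.log (ρ r)))
    (hρsuper : Tendsto (fun r : ℝ => ρ r / r) (nhdsWithin 0 (Ioi 0)) atTop) :
    Tendsto (fun r : ℝ => f r / r) (nhdsWithin 0 (Ioi 0)) atTop := by
  have hlog_one_div : Tendsto (fun r : ℝ => log (1 / r)) (nhdsWithin 0 (Ioi 0)) atTop := by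
    simpa only [one_div, Function.comp_def] using tendsto_log_atTop.comp tendsto_inv_nhdsGT_zero
  have hlog_ρ : Tendsto (fun r => (2 * log (f 1) - C + log (ρ r / r)) / 2)
      (nhdsWithin 0 (Ioi 0)) atTop :=
    (tendsto_atTop_add_const_left _ _ (tendsto_log_atTop.comp hρsuper)).atTop_div_const two_pos
  have hlog_f : Tendsto (fun r => log (f r / r)) (nhdsWithin 0 (Ioi 0)) atTop := by
    refine tendsto_atTop_mono' _ ?_
      (tendsto_inf_atTop _ (tendsto_atTop_add_const_left _ (log (f 1)) hlog_one_div) hlog_ρ)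
    filter_upwards [Ioo_mem_nhdsGT one_pos, hρsuper.eventually_gt_atTop 0] with r hr hρr
    have hρr_pos : 0 < ρ r := (div_pos_iff_of_pos_right hr.1).mp hρr
    exact min_le_log_div_of_le_sqrt_mul_sqrt hr.1 hr.2.le hρr_pos.ne' (hfpos r hr.1).ne'
      (hest r hr)
  refine (tendsto_exp_atTop.comp hlog_f).congr' ?_
  filter_upwards [self_mem_nhdsWithin] with r hr
  exact exp_log (div_pos (hfpos r hr) hr)

/-- **Concluding contradiction argument of Lemma fSuperlinear.** Let
`f, ρ : (0,∞) → (0,∞)` and `C ∈ ℝ` be such that for all `r ∈ (0,1)`,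
`log f(1) − log f(r) ≤ √(log(1/r)) · √(C − log ρ(r))` (with `√x = 0` for
`x < 0`). If `ρ(r)/r → ∞` as `r → 0⁺`, then `f(r)/r → ∞` as `r → 0⁺`. -/
theorem superlinear_of_sqrt_log_estimate
    (f ρ : ℝ → ℝ) (C : ℝ)
    (hfpos : ∀ r ∈ Ioi (0:ℝ), 0 < f r)
    (hρpos : ∀ r ∈ Ioi (0:ℝ), 0 < ρ r)
    (hest : ∀ r ∈ Ioo (0:ℝ) 1,
      Real.log (f 1) - Real.log (f r) ≤
        Real.sqrt (Real.log (1 / r)) * Real.sqrt (C - Real.log (ρ r)))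
    (hρsuper : Tendsto (fun r : ℝ => ρ r / r) (nhdsWithin 0 (Ioi 0)) atTop) :
    Tendsto (fun r : ℝ => f r / r) (nhdsWithin 0 (Ioi 0)) atTop :=
  superlinear_of_sqrt_log_estimate_general f ρ C hfpos hest hρsuper
end
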